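/- If G is a finite connected graph with at least 2 vertices, then gpg(G) = 2 if and only if every vertex x of G is contained in a pair of vertices that induces a universal line, i.e., for every vertex x there exists a vertex x' with L(x,x') = V(G). -/
import Mathlib


open Finset SimpleGraph

variable {V : Type*}

/-- `S` is in general position in `G`: no shortest path of `G` contains more than
two vertices of `S`. -/
def IsGPSet (G : SimpleGraph V) (S : Set V) : Prop :=
  ∀ ⦃u v : V⦄ (p : G.Walk u v), p.IsPath → p.length = G.dist u v →
    (S ∩ {x | x ∈ p.support}).ncard ≤ 2

open scoped Classical in
/-- The set of vertices that can legally be played when the set of already selected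
vertices is `S`. -/
noncomputable def playable [Fintype V] (G : SimpleGraph V) (S : Finset V) : Finset V :=
  Finset.univ.filter (fun v => v ∉ S ∧ IsGPSet G (↑(insert v S) : Set V))

open scoped Classical in
/-- Value (final set size with optimal play) of the Builder-Blocker general position game
from position `S` with the given player to move (`true` = Builder, the maximiser;
`false` = Blocker, the minimiser), computed with a fuel parameter. -/
noncomputable def gameValAux [Fintype V] (G : SimpleGraph V) : ℕ → Bool → Finset V → ℕ
  | 0, _, S => S.card
  | fuel + 1, turn, S =>
    if h : (playable G S).Nonempty then
      if turn then (playable G S).sup' h (fun v => gameValAux G fuel (!turn) (insert v S))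
      else (playable G S).inf' h (fun v => gameValAux G fuel (!turn) (insert v S))
    else S.card

/-- Value of the Builder-Blocker general position game from position `S`,
with `turn = true` meaning Builder (the maximiser) is to move. Since at most
`Fintype.card V - S.card` further moves are possible, this fuel suffices. -/
noncomputable def gameVal [Fintype V] (G : SimpleGraph V) (turn : Bool) (S : Finset V) : ℕ :=
  gameValAux G (Fintype.card V - S.card) turn S

/-- The B-game general position number: Builder moves first. -/
noncomputable def gpg [Fintype V] (G : SimpleGraph V) : ℕ := gameVal G true ∅

/-- The B'-game general position number: Blocker moves first. -/
noncomputable def gpg' [Fintype V] (G : SimpleGraph V) : ℕ := gameVal G false ∅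

/-- The line induced by `x` and `y`: vertices `z` with `d(x,y) = d(x,z) + d(z,y)`
or `d(x,y) = |d(x,z) - d(z,y)|`. -/
def gline (G : SimpleGraph V) (x y : V) : Set V :=
  {z | G.dist x y = G.dist x z + G.dist z y ∨
       (G.dist x y : ℤ) = |(G.dist x z : ℤ) - (G.dist z y : ℤ)|}

/-! ### Auxiliary lemmas -/

lemma isGPSet_small (G : SimpleGraph V) {S : Set V} (hS : S.Finite) (h : S.ncard ≤ 2) :
    IsGPSet G S := fun _ _ _ _ _ =>
  le_trans (Set.ncard_le_ncard Set.inter_subset_left hS) h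

open scoped Classical in
lemma split_dist (G : SimpleGraph V) {u v a : V} (q : G.Walk u v)
    (hl : q.length = G.dist u v) (ha : a ∈ q.support) :
    (q.takeUntil a ha).length = G.dist u a ∧ (q.dropUntil a ha).length = G.dist a v ∧
      G.dist u a + G.dist a v = G.dist u v := by
  have hsum : (q.takeUntil a ha).length + (q.dropUntil a ha).length = q.length := by
    rw [← SimpleGraph.Walk.length_append, q.take_spec ha]
  have h1 := SimpleGraph.dist_le (q.takeUntil a ha)
  have h2 := SimpleGraph.dist_le (q.dropUntil a ha)
  have h3 : G.dist u v ≤ G.dist u a + G.dist a v := by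
    obtain ⟨p1, hp1⟩ := (SimpleGraph.Reachable.exists_walk_length_eq_dist
      ⟨q.takeUntil a ha⟩)
    obtain ⟨p2, hp2⟩ := (SimpleGraph.Reachable.exists_walk_length_eq_dist
      ⟨q.dropUntil a ha⟩)
    calc G.dist u v ≤ (p1.append p2).length := SimpleGraph.dist_le _
    _ = _ := by rw [SimpleGraph.Walk.length_append, hp1, hp2]
  omega

open scoped Classical in
lemma geo_between (G : SimpleGraph V) {u v a b : V} (q : G.Walk u v)
    (hl : q.length = G.dist u v) (ha : a ∈ q.support) (hb : b ∈ q.support) :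
    G.dist u a + G.dist a b = G.dist u b ∨ G.dist u b + G.dist b a = G.dist u a := by
  obtain ⟨hlen1, hlen2, hsum⟩ := split_dist G q hl ha
  have hb' : b ∈ (q.takeUntil a ha).support ∨ b ∈ (q.dropUntil a ha).support := by
    have := q.take_spec ha
    rw [← this, SimpleGraph.Walk.mem_support_append_iff] at hb
    exact hb
  rcases hb' with hb1 | hb2
  · right
    exact (split_dist G _ hlen1 hb1).2.2
  · left
    have h1 := (split_dist G _ hlen2 hb2).2.2
    obtain ⟨_, _, h2⟩ := split_dist G q hl hb
    omega

lemma left_mem_gline (G : SimpleGraph V) (x y : V) : x ∈ gline G x y := by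
  right
  simp [SimpleGraph.dist_self]

lemma right_mem_gline (G : SimpleGraph V) (x y : V) : y ∈ gline G x y := by
  right
  simp [SimpleGraph.dist_self]

lemma notGP_of_between (G : SimpleGraph V) (hG : G.Connected) {a b c : V}
    (hab : a ≠ b) (hbc : b ≠ c) (hac : a ≠ c)
    (h : G.dist a c = G.dist a b + G.dist b c) : ¬ IsGPSet G {a, b, c} := by
  obtain ⟨p1, hp1⟩ := hG.exists_walk_length_eq_dist a b
  obtain ⟨p2, hp2⟩ := hG.exists_walk_length_eq_dist b c
  set p := p1.append p2 with hp
  have hlen : p.length = G.dist a c := by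
    rw [hp, SimpleGraph.Walk.length_append, hp1, hp2, h]
  intro hGP
  have hpath : p.IsPath := p.isPath_of_length_eq_dist hlen
  have hcard := hGP p hpath hlen
  have hsub : ({a, b, c} : Set V) ⊆ {x | x ∈ p.support} := by
    intro w hw
    rcases hw with rfl | rfl | rfl
    · exact SimpleGraph.Walk.start_mem_support p
    · exact SimpleGraph.Walk.mem_support_append_iff _ _ |>.mpr
        (Or.inl (SimpleGraph.Walk.end_mem_support p1))
    · exact SimpleGraph.Walk.end_mem_support p
  rw [Set.inter_eq_left.mpr hsub] at hcard
  have h3 : ({a, b, c} : Set V).ncard = 3 := by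
    rw [Set.ncard_insert_of_notMem (by simp [hab, hac]),
      Set.ncard_insert_of_notMem (by simp [hbc]), Set.ncard_singleton]
  omega

lemma notGP_iff (G : SimpleGraph V) (hG : G.Connected) {x y z : V}
    (hxy : x ≠ y) (hzx : z ≠ x) (hzy : z ≠ y) :
    ¬ IsGPSet G {x, y, z} ↔ z ∈ gline G x y := by
  constructor
  · intro hGP
    simp only [IsGPSet, not_forall] at hGP
    obtain ⟨u, v, p, hpath, hlen, hbig⟩ := hGP
    push_neg at hbig
    have pair_le : ∀ a b : V, ({a, b} : Set V).ncard ≤ 2 := fun a b =>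
      le_trans (Set.ncard_insert_le a {b}) (by simp)
    have hx : x ∈ p.support := by
      by_contra hws
      have hsub : ({x, y, z} : Set V) ∩ {s | s ∈ p.support} ⊆ {y, z} := by
        rintro t ⟨ht1, ht2⟩
        rcases ht1 with rfl | h
        · exact absurd ht2 hws
        · exact h
      have := le_trans (Set.ncard_le_ncard hsub (Set.toFinite _)) (pair_le y z)
      omega
    have hy : y ∈ p.support := by
      by_contra hws
      have hsub : ({x, y, z} : Set V) ∩ {s | s ∈ p.support} ⊆ {x, z} := by
        rintro t ⟨ht1, ht2⟩
        rcases ht1 with rfl | rfl | rfl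
        · exact Or.inl rfl
        · exact absurd ht2 hws
        · exact Or.inr rfl
      have := le_trans (Set.ncard_le_ncard hsub (Set.toFinite _)) (pair_le x z)
      omega
    have hz : z ∈ p.support := by
      by_contra hws
      have hsub : ({x, y, z} : Set V) ∩ {s | s ∈ p.support} ⊆ {x, y} := by
        rintro t ⟨ht1, ht2⟩
        rcases ht1 with rfl | rfl | rfl
        · exact Or.inl rfl
        · exact Or.inr rfl
        · exact absurd ht2 hws
      have := le_trans (Set.ncard_le_ncard hsub (Set.toFinite _)) (pair_le x y)
      omega
    have hxy' := geo_between G p hlen hx hy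
    have hxz' := geo_between G p hlen hx hz
    have hzy' := geo_between G p hlen hz hy
    rw [SimpleGraph.dist_comm (u := y) (v := x)] at hxy'
    rw [SimpleGraph.dist_comm (u := z) (v := x)] at hxz'
    rw [SimpleGraph.dist_comm (u := y) (v := z)] at hzy'
    have key : G.dist x y = G.dist x z + G.dist z y ∨
        G.dist x y + G.dist z y = G.dist x z ∨
        G.dist x y + G.dist x z = G.dist z y := by omega
    rcases key with h1 | h2 | h3
    · exact Or.inl h1
    · exact Or.inr (((abs_eq (Int.natCast_nonneg _)).mpr (by omega)).symm)
    · exact Or.inr (((abs_eq (Int.natCast_nonneg _)).mpr (by omega)).symm)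
  · intro hz
    have key : G.dist x y = G.dist x z + G.dist z y ∨
        G.dist x z = G.dist x y + G.dist y z ∨
        G.dist z y = G.dist z x + G.dist x y := by
      rcases hz with h1 | h2
      · exact Or.inl h1
      · rw [eq_comm, abs_eq (Int.natCast_nonneg _)] at h2
        rw [SimpleGraph.dist_comm (u := y) (v := z), SimpleGraph.dist_comm (u := z) (v := x)]
        omega
    rcases key with h1 | h2 | h3
    · have := notGP_of_between G hG hzx.symm hzy hxy h1
      have hset : ({x, z, y} : Set V) = {x, y, z} := by ext t; simp; tauto
      rwa [hset] at this
    · exact notGP_of_between G hG hxy hzy.symm hzx.symm h2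
    · have := notGP_of_between G hG hzx hxy hzy h3
      have hset : ({z, x, y} : Set V) = {x, y, z} := by ext t; simp; tauto
      rwa [hset] at this

open scoped Classical

lemma mem_playable_iff [Fintype V] {G : SimpleGraph V} {S : Finset V} {v : V} :
    v ∈ playable G S ↔ v ∉ S ∧ IsGPSet G (↑(insert v S) : Set V) := by
  simp [playable]

lemma card_le_gameValAux [Fintype V] (G : SimpleGraph V) :
    ∀ fuel turn S, S.card ≤ gameValAux G fuel turn S
  | 0, _, S => le_rfl
  | fuel+1, turn, S => by
    rw [gameValAux]
    by_cases h : (playable G S).Nonempty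
    · rw [dif_pos h]
      have key : ∀ v ∈ playable G S, S.card ≤ gameValAux G fuel (!turn) (insert v S) :=
        fun v _ => le_trans (Finset.card_le_card (Finset.subset_insert v S))
          (card_le_gameValAux G fuel _ _)
      cases turn
      · simp only [Bool.false_eq_true, if_false]
        exact Finset.le_inf' h _ key
      · simp only [if_true]
        obtain ⟨v, hv⟩ := h
        exact le_trans (key v hv) (Finset.le_sup' (fun v => gameValAux G fuel (!true) (insert v S)) hv)
    · rw [dif_neg h]

lemma succ_card_le_gameValAux [Fintype V] (G : SimpleGraph V) (fuel : ℕ) (turn : Bool)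
    (S : Finset V) (h : (playable G S).Nonempty) :
    S.card + 1 ≤ gameValAux G (fuel + 1) turn S := by
  rw [gameValAux, dif_pos h]
  have key : ∀ v ∈ playable G S, S.card + 1 ≤ gameValAux G fuel (!turn) (insert v S) := by
    intro v hv
    have hvS : v ∉ S := (mem_playable_iff.mp hv).1
    calc S.card + 1 = (insert v S).card := (Finset.card_insert_of_notMem hvS).symm
    _ ≤ _ := card_le_gameValAux G fuel _ _
  cases turn
  · simp only [Bool.false_eq_true, if_false]
    exact Finset.le_inf' h _ key
  · simp only [if_true]
    obtain ⟨v, hv⟩ := h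
    exact le_trans (key v hv) (Finset.le_sup' (fun v => gameValAux G fuel (!true) (insert v S)) hv)

lemma gameValAux_of_empty [Fintype V] (G : SimpleGraph V) (fuel : ℕ) (turn : Bool)
    (S : Finset V) (h : playable G S = ∅) : gameValAux G fuel turn S = S.card := by
  cases fuel
  · rfl
  · rw [gameValAux, dif_neg (by simp [h])]

/-- `gpg(G) = 2` iff every vertex is contained in a pair inducing a universal line. -/
theorem stmt_9 {V : Type*} [Fintype V] (G : SimpleGraph V) (hG : G.Connected)
    (h2 : 2 ≤ Fintype.card V) :
    gpg G = 2 ↔ ∀ x : V, ∃ x' : V, x' ≠ x ∧ gline G x x' = Set.univ := by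
  classical
  obtain ⟨m, hm⟩ : ∃ m, Fintype.card V = m + 2 := ⟨Fintype.card V - 2, by omega⟩
  -- any position with at most one vertex is extendable by anything
  have hsmall : ∀ (S : Finset V) (v : V), v ∉ S → S.card ≤ 1 → v ∈ playable G S := by
    intro S v hv hc
    refine mem_playable_iff.mpr ⟨hv, isGPSet_small G (Set.toFinite _) ?_⟩
    rw [Set.ncard_coe_finset]
    calc (insert v S).card ≤ S.card + 1 := Finset.card_insert_le _ _
    _ ≤ 2 := by omega
  have mem_pl1 : ∀ x y : V, y ∈ playable G (insert x ∅) ↔ y ≠ x := by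
    intro x y
    constructor
    · intro h
      have := (mem_playable_iff.mp h).1
      simpa using this
    · intro h
      exact hsmall _ y (by simpa using h) (by simp)
  have hpe : (playable G ∅).Nonempty := by
    have : Nonempty V := Fintype.card_pos_iff.mp (by omega)
    obtain ⟨v⟩ := this
    exact ⟨v, hsmall ∅ v (by simp) (by simp)⟩
  have hne1 : ∀ x : V, (playable G (insert x ∅)).Nonempty := by
    intro x
    obtain ⟨y, hy⟩ := Fintype.exists_ne_of_one_lt_card (by omega) x
    exact ⟨y, (mem_pl1 x y).mpr hy⟩
  -- the characterization of maximal pairs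
  have pair_iff : ∀ x y : V, y ≠ x →
      (playable G (insert y (insert x ∅)) = ∅ ↔ gline G x y = Set.univ) := by
    intro x y hyx
    have hset : ∀ z : V, ((insert z (insert y (insert x ∅)) : Finset V) : Set V)
        = ({x, y, z} : Set V) := by
      intro z; ext t; simp; tauto
    constructor
    · intro h
      apply Set.eq_univ_iff_forall.mpr
      intro z
      by_cases hzx : z = x
      · exact hzx ▸ left_mem_gline G x y
      by_cases hzy : z = y
      · exact hzy ▸ right_mem_gline G x y
      refine (notGP_iff G hG (Ne.symm hyx) hzx hzy).mp ?_
      intro hGP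
      have hzmem : z ∈ playable G (insert y (insert x ∅)) := by
        refine mem_playable_iff.mpr ⟨by simp [hzx, hzy], ?_⟩
        rw [hset z]
        exact hGP
      rw [h] at hzmem
      exact absurd hzmem (Finset.notMem_empty z)
    · intro h
      apply Finset.eq_empty_iff_forall_notMem.mpr
      intro z hz
      obtain ⟨hz1, hz2⟩ := mem_playable_iff.mp hz
      have hzx : z ≠ x := by intro e; apply hz1; simp [e]
      have hzy : z ≠ y := by intro e; apply hz1; simp [e]
      have hzl : z ∈ gline G x y := h ▸ Set.mem_univ z
      exact (notGP_iff G hG (Ne.symm hyx) hzx hzy).mpr hzl (by rwa [hset z] at hz2)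
  -- values of two-element positions
  have two_le_val : ∀ x y : V, y ≠ x →
      2 ≤ gameValAux G m true (insert y (insert x ∅)) := by
    intro x y hyx
    have : (insert y (insert x ∅) : Finset V).card = 2 := by
      rw [Finset.card_insert_of_notMem (by simpa using hyx)]; simp
    calc 2 = (insert y (insert x ∅) : Finset V).card := this.symm
    _ ≤ _ := card_le_gameValAux G m true _
  have val_iff : ∀ x y : V, y ≠ x →
      (gameValAux G m true (insert y (insert x ∅)) = 2 ↔ gline G x y = Set.univ) := by
    intro x y hyx
    rw [← pair_iff x y hyx]
    have hcard2 : (insert y (insert x ∅) : Finset V).card = 2 := by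
      rw [Finset.card_insert_of_notMem (by simpa using hyx)]; simp
    constructor
    · intro h
      by_contra hne
      obtain ⟨z, hz⟩ := Finset.nonempty_iff_ne_empty.mpr hne
      have hz1 : z ∉ (insert y (insert x ∅) : Finset V) := (mem_playable_iff.mp hz).1
      -- then there are at least 3 vertices, so m ≥ 1
      have h3 : 3 ≤ Fintype.card V := by
        have hsub : (insert z (insert y (insert x ∅)) : Finset V) ⊆ Finset.univ :=
          Finset.subset_univ _
        have := Finset.card_le_card hsub
        rw [Finset.card_insert_of_notMem hz1, hcard2] at this
        simpa [Finset.card_univ] using this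
      obtain ⟨k, hk⟩ : ∃ k, m = k + 1 := ⟨m - 1, by omega⟩
      have := succ_card_le_gameValAux G k true (insert y (insert x ∅)) ⟨z, hz⟩
      rw [← hk, hcard2] at this
      omega
    · intro h
      rw [gameValAux_of_empty G m true _ h, hcard2]
  -- unfold the game value
  have key1 : gpg G = (playable G ∅).sup' hpe
      (fun x => gameValAux G (m + 1) false (insert x ∅)) := by
    rw [gpg, gameVal]
    simp only [Finset.card_empty, Nat.sub_zero, hm]
    rw [gameValAux, dif_pos hpe, if_pos rfl]
    simp only [Bool.not_true]
  have key2 : ∀ x : V, gameValAux G (m + 1) false (insert x ∅) =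
      (playable G (insert x ∅)).inf' (hne1 x)
        (fun y => gameValAux G m true (insert y (insert x ∅))) := by
    intro x
    rw [gameValAux, dif_pos (hne1 x)]
    simp
  -- every branch value is at least 2
  have branch_ge : ∀ x : V, 2 ≤ gameValAux G (m + 1) false (insert x ∅) := by
    intro x
    rw [key2 x]
    apply Finset.le_inf'
    intro y hy
    exact two_le_val x y ((mem_pl1 x y).mp hy)
  constructor
  · intro hgpg x
    have hsup : (playable G ∅).sup' hpe
        (fun x => gameValAux G (m + 1) false (insert x ∅)) = 2 := by rw [← key1, hgpg]
    have hxp : x ∈ playable G ∅ := hsmall ∅ x (by simp) (by simp)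
    have hx2 : gameValAux G (m + 1) false (insert x ∅) ≤ 2 := by
      rw [← hsup]
      exact Finset.le_sup' (fun x => gameValAux G (m + 1) false (insert x ∅)) hxp
    rw [key2 x] at hx2
    rw [Finset.inf'_le_iff] at hx2
    obtain ⟨y, hy, hy2⟩ := hx2
    have hyx : y ≠ x := (mem_pl1 x y).mp hy
    refine ⟨y, hyx, ?_⟩
    exact (val_iff x y hyx).mp (le_antisymm hy2 (two_le_val x y hyx))
  · intro hline
    rw [key1]
    apply le_antisymm
    · apply Finset.sup'_le
      intro x _
      obtain ⟨y, hyx, hy⟩ := hline x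
      rw [key2 x]
      exact Finset.inf'_le_of_le _ ((mem_pl1 x y).mpr hyx) (le_of_eq ((val_iff x y hyx).mpr hy))
    · obtain ⟨x, hx⟩ := hpe
      exact le_trans (branch_ge x)
        (Finset.le_sup' (fun x => gameValAux G (m + 1) false (insert x ∅)) hx)
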